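/- Let θ be one of the closure rules θ_Y, θ_M, θ_{M/Y}, where for θ_Y and θ_{M/Y} the split closure of any non-weakly-compatible Σ ∈ P(X) is taken to be ω. Then for every irreducible collection Σ ∈ P(X) of partial splits of X, any two split closures of Σ obtained via θ are equal. -/
import Mathlib


/-!
Common definitions: partial splits of a finite set `X`, modelled as unordered
pairs (`Sym2`) of nonempty disjoint subsets of `X`; the `M`-, `Y`- and `Z`-
closure rules; weak compatibility; `X`-cycles and display; split closure
sequences and split closures.
-/

variable {X : Type*}

/-- `S` is a partial split of `X`: an unordered pair of nonempty disjoint subsets of `X`. -/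
def IsPartialSplit (S : Sym2 (Set X)) : Prop :=
  ∃ A B : Set X, S = s(A, B) ∧ A.Nonempty ∧ B.Nonempty ∧ Disjoint A B

/-- `S` is a full split of `X`: a partial split whose two parts cover `X`. -/
def IsFullSplit (S : Sym2 (Set X)) : Prop :=
  ∃ A B : Set X, S = s(A, B) ∧ A.Nonempty ∧ B.Nonempty ∧ Disjoint A B ∧ A ∪ B = Set.univ

/-- The partial split `S` extends the partial split `T`. -/
def SplitExtends (S T : Sym2 (Set X)) : Prop :=
  ∃ A B C D : Set X, S = s(A, B) ∧ T = s(C, D) ∧ C ⊆ A ∧ D ⊆ B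

/-- `Sig ⪯ Sig'`: every partial split of `Sig` is extended by one of `Sig'`. -/
def Preceq (Sig Sig' : Set (Sym2 (Set X))) : Prop :=
  ∀ S ∈ Sig, ∃ T ∈ Sig', SplitExtends T S

/-- `Sig⁻`: the set obtained from `Sig` by removing all redundant partial splits,
i.e. those extended by a different element of `Sig`. -/
def sreduce (Sig : Set (Sym2 (Set X))) : Set (Sym2 (Set X)) :=
  {S | S ∈ Sig ∧ ¬ ∃ T ∈ Sig, T ≠ S ∧ SplitExtends T S}

/-- `Sig ∈ P(X)`: `Sig` is an irreducible collection of partial splits of `X`. -/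
def InPX (Sig : Set (Sym2 (Set X))) : Prop :=
  (∀ S ∈ Sig, IsPartialSplit S) ∧ sreduce Sig = Sig

/-- Two partial splits are compatible if some part of one is disjoint from some part
of the other. -/
def SplitCompatible (S T : Sym2 (Set X)) : Prop :=
  ∃ A B C D : Set X, S = s(A, B) ∧ T = s(C, D) ∧ A ∩ C = ∅

/-- Weak compatibility of a (multi)triple of partial splits: for every choice of parts,
one of the four distinguished triple intersections is empty. -/
def WeaklyCompatTriple (S1 S2 S3 : Sym2 (Set X)) : Prop :=
  ∀ A1 B1 A2 B2 A3 B3 : Set X,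
    S1 = s(A1, B1) → S2 = s(A2, B2) → S3 = s(A3, B3) →
    A1 ∩ A2 ∩ A3 = ∅ ∨ B1 ∩ B2 ∩ A3 = ∅ ∨ B1 ∩ A2 ∩ B3 = ∅ ∨ A1 ∩ B2 ∩ B3 = ∅

/-- A collection of partial splits is weakly compatible if every three of its members are. -/
def WeaklyCompatible (Sig : Set (Sym2 (Set X))) : Prop :=
  ∀ S1 ∈ Sig, ∀ S2 ∈ Sig, ∀ S3 ∈ Sig, WeaklyCompatTriple S1 S2 S3

/-- Condition of the `M`-rule for the parts `A1|B1`, `A2|B2`. -/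
def mCond (A1 B1 A2 B2 : Set X) : Prop :=
  (A1 ∩ A2).Nonempty ∧ (B1 ∩ B2).Nonempty

/-- Output of the `M`-rule applied with respect to the parts `A1|B1`, `A2|B2`. -/
def mOut (A1 B1 A2 B2 : Set X) : Set (Sym2 (Set X)) :=
  {s(A1, B1), s(A2, B2), s(A1 ∩ A2, B1 ∪ B2), s(B1 ∩ B2, A1 ∪ A2)}

/-- Condition of the `Y`-rule for the parts `A1|B1`, `A2|B2`, `A3|B3`. -/
def yCond (A1 B1 A2 B2 A3 B3 : Set X) : Prop :=
  (A1 ∩ A2 ∩ A3).Nonempty ∧ (B1 ∩ B2 ∩ A3).Nonempty ∧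
    (B1 ∩ A2 ∩ B3).Nonempty ∧ A1 ∩ B2 ∩ B3 = ∅

/-- Output of the `Y`-rule applied with respect to the parts `A1|B1`, `A2|B2`, `A3|B3`. -/
def yOut (A1 B1 A2 B2 A3 B3 : Set X) : Set (Sym2 (Set X)) :=
  {s(B1 ∪ (B2 ∩ B3), A1), s(A2 ∪ (A1 ∩ B3), B2), s(A3 ∪ (A1 ∩ B2), B3)}

/-- Condition of the `Z`-rule for the parts `A1|B1`, `A2|B2`. -/
def zCond (A1 B1 A2 B2 : Set X) : Prop :=
  (A1 ∩ A2).Nonempty ∧ (A2 ∩ B1).Nonempty ∧ (B1 ∩ B2).Nonempty ∧ A1 ∩ B2 = ∅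

/-- Output of the `Z`-rule applied with respect to the parts `A1|B1`, `A2|B2`. -/
def zOut (A1 B1 A2 B2 : Set X) : Set (Sym2 (Set X)) :=
  {s(B1 ∪ B2, A1), s(B2, A1 ∪ A2)}

/-- `Sig'` is obtained from `Sig` by a single application of the `Y`-rule. -/
def yStep (Sig Sig' : Set (Sym2 (Set X))) : Prop :=
  ∃ A1 B1 A2 B2 A3 B3 : Set X,
    s(A1, B1) ∈ Sig ∧ s(A2, B2) ∈ Sig ∧ s(A3, B3) ∈ Sig ∧
    s(A1, B1) ≠ s(A2, B2) ∧ s(A1, B1) ≠ s(A3, B3) ∧ s(A2, B2) ≠ s(A3, B3) ∧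
    yCond A1 B1 A2 B2 A3 B3 ∧
    Sig' = sreduce (Sig ∪ yOut A1 B1 A2 B2 A3 B3)

/-- `Sig'` is obtained from `Sig` by a single application of the `M`-rule. -/
def mStep (Sig Sig' : Set (Sym2 (Set X))) : Prop :=
  ∃ A1 B1 A2 B2 : Set X,
    s(A1, B1) ∈ Sig ∧ s(A2, B2) ∈ Sig ∧ s(A1, B1) ≠ s(A2, B2) ∧
    mCond A1 B1 A2 B2 ∧
    Sig' = sreduce (Sig ∪ mOut A1 B1 A2 B2)

/-- `Sig'` is obtained from `Sig` by a single non-trivial application of the `Y`-rule. -/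
def yStepNT (Sig Sig' : Set (Sym2 (Set X))) : Prop :=
  ∃ A1 B1 A2 B2 A3 B3 : Set X,
    s(A1, B1) ∈ Sig ∧ s(A2, B2) ∈ Sig ∧ s(A3, B3) ∈ Sig ∧
    s(A1, B1) ≠ s(A2, B2) ∧ s(A1, B1) ≠ s(A3, B3) ∧ s(A2, B2) ≠ s(A3, B3) ∧
    yCond A1 B1 A2 B2 A3 B3 ∧
    ¬ Preceq (sreduce (yOut A1 B1 A2 B2 A3 B3)) Sig ∧
    Sig' = sreduce (Sig ∪ yOut A1 B1 A2 B2 A3 B3)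

/-- `Sig'` is obtained from `Sig` by a single non-trivial application of the `M`-rule. -/
def mStepNT (Sig Sig' : Set (Sym2 (Set X))) : Prop :=
  ∃ A1 B1 A2 B2 : Set X,
    s(A1, B1) ∈ Sig ∧ s(A2, B2) ∈ Sig ∧ s(A1, B1) ≠ s(A2, B2) ∧
    mCond A1 B1 A2 B2 ∧
    ¬ Preceq (sreduce (mOut A1 B1 A2 B2)) Sig ∧
    Sig' = sreduce (Sig ∪ mOut A1 B1 A2 B2)

/-- `Sig` is closed under the `Y`-rule: every application of the `Y`-rule to `Sig` is trivial. -/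
def yClosed (Sig : Set (Sym2 (Set X))) : Prop :=
  ∀ A1 B1 A2 B2 A3 B3 : Set X,
    s(A1, B1) ∈ Sig → s(A2, B2) ∈ Sig → s(A3, B3) ∈ Sig →
    s(A1, B1) ≠ s(A2, B2) → s(A1, B1) ≠ s(A3, B3) → s(A2, B2) ≠ s(A3, B3) →
    yCond A1 B1 A2 B2 A3 B3 →
    Preceq (sreduce (yOut A1 B1 A2 B2 A3 B3)) Sig

/-- `Sig` is closed under the `M`-rule: every application of the `M`-rule to `Sig` is trivial. -/
def mClosed (Sig : Set (Sym2 (Set X))) : Prop :=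
  ∀ A1 B1 A2 B2 : Set X,
    s(A1, B1) ∈ Sig → s(A2, B2) ∈ Sig → s(A1, B1) ≠ s(A2, B2) →
    mCond A1 B1 A2 B2 →
    Preceq (sreduce (mOut A1 B1 A2 B2)) Sig

/-- A split closure sequence for `Sig` of length `n` with respect to the property `P` and
the non-trivial single-application relation `stepNT`: a strictly `⪯`-increasing sequence
in `P(X)` starting at `Sig` in which every term satisfying `P` is followed by the result
of one non-trivial application of the rule. -/
def IsClosureSeq (P : Set (Sym2 (Set X)) → Prop)
    (stepNT : Set (Sym2 (Set X)) → Set (Sym2 (Set X)) → Prop)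
    (Sig : Set (Sym2 (Set X))) (n : ℕ) (f : ℕ → Set (Sym2 (Set X))) : Prop :=
  f 0 = Sig ∧ (∀ i ≤ n, InPX (f i)) ∧
    (∀ i < n, P (f i) ∧ stepNT (f i) (f (i + 1)) ∧
      Preceq (f i) (f (i + 1)) ∧ f i ≠ f (i + 1))

/-- `cl` is a split closure of `Sig` (with `cl = none` playing the role of `ω`):
the last element of a split closure sequence for `Sig`, which either satisfies `P` and is
closed under the rule, or fails `P`, in which case it is replaced by `ω`. -/
def IsSplitClosure (P : Set (Sym2 (Set X)) → Prop)
    (stepNT : Set (Sym2 (Set X)) → Set (Sym2 (Set X)) → Prop)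
    (closed : Set (Sym2 (Set X)) → Prop)
    (Sig : Set (Sym2 (Set X))) (cl : Option (Set (Sym2 (Set X)))) : Prop :=
  ∃ (n : ℕ) (f : ℕ → Set (Sym2 (Set X))),
    IsClosureSeq P stepNT Sig n f ∧
    ((P (f n) ∧ closed (f n) ∧ cl = some (f n)) ∨ (¬ P (f n) ∧ cl = none))

/-- Split closure with respect to the `Y`-rule, `(P)` being weak compatibility. -/
def IsYClosure (Sig : Set (Sym2 (Set X))) (cl : Option (Set (Sym2 (Set X)))) : Prop :=
  IsSplitClosure WeaklyCompatible yStepNT yClosed Sig cl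

/-- Split closure with respect to the `M`-rule, `(P)` holding for all collections. -/
def IsMClosure (Sig : Set (Sym2 (Set X))) (cl : Option (Set (Sym2 (Set X)))) : Prop :=
  IsSplitClosure (fun _ => True) mStepNT mClosed Sig cl

/-- Split closure with respect to the combined `M/Y`-rule, `(P)` being weak compatibility. -/
def IsMYClosure (Sig : Set (Sym2 (Set X))) (cl : Option (Set (Sym2 (Set X)))) : Prop :=
  IsSplitClosure WeaklyCompatible
    (fun s s' => mStepNT s s' ∨ yStepNT s s') (fun s => mClosed s ∧ yClosed s) Sig cl

/-- `C` is an `X`-cycle: a connected graph on the vertex set `X` (`|X| ≥ 3`) in which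
every vertex has degree `2`. -/
def IsXCycle (C : SimpleGraph X) : Prop :=
  C.Connected ∧ 3 ≤ Nat.card X ∧ ∀ v : X, (C.neighborSet v).ncard = 2

/-- The partial split `S` is displayed by the `X`-cycle `C`: there are two distinct
edges of `C` whose deletion leaves one component containing one part of `S` and
another component containing the other part. -/
def DisplaysSplit (C : SimpleGraph X) (S : Sym2 (Set X)) : Prop :=
  ∃ A B : Set X, S = s(A, B) ∧
    ∃ e1 e2 : Sym2 X, e1 ∈ C.edgeSet ∧ e2 ∈ C.edgeSet ∧ e1 ≠ e2 ∧
      ∃ c1 c2 : (C.deleteEdges {e1, e2}).ConnectedComponent,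
        c1 ≠ c2 ∧ A ⊆ c1.supp ∧ B ⊆ c2.supp

/-- A collection of partial splits is displayed by `C` if each of its members is. -/
def DisplaysColl (C : SimpleGraph X) (Sig : Set (Sym2 (Set X))) : Prop :=
  ∀ S ∈ Sig, DisplaysSplit C S

/-- `cl ≠ ω` and the underlying collection is displayed by `C`. -/
def OptionDisplays (C : SimpleGraph X) (cl : Option (Set (Sym2 (Set X)))) : Prop :=
  ∃ Sig, cl = some Sig ∧ DisplaysColl C Sig

/-- The ground set `A ∪ B` of a partial split `A|B`. -/
def splitGround (S : Sym2 (Set X)) : Set X :=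
  ⋃₀ {A : Set X | A ∈ S}

/-- Membership in `P_ω(X) = P(X) ∪ {ω}`. -/
def InPOmega (x : Option (Set (Sym2 (Set X)))) : Prop :=
  x = none ∨ ∃ Sig, x = some Sig ∧ InPX Sig

/-- The order `⪯` on `P_ω(X)`, with `Sig ⪯ ω` for all `Sig` and `ω ⪯ ω`. -/
def PreceqO (x y : Option (Set (Sym2 (Set X)))) : Prop :=
  y = none ∨ ∃ Sig Sig', x = some Sig ∧ y = some Sig' ∧ Preceq Sig Sig'

/-- Split closure as a relation on `P_ω(X)`, with `⟨ω⟩ = ω`. -/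
def ClosO (cls : Set (Sym2 (Set X)) → Option (Set (Sym2 (Set X))) → Prop)
    (x y : Option (Set (Sym2 (Set X)))) : Prop :=
  (x = none ∧ y = none) ∨ ∃ Sig, x = some Sig ∧ cls Sig y

/-! ### Auxiliary lemmas for statement 14 -/

lemma extends_refl' (S : Sym2 (Set X)) : SplitExtends S S := by
  induction S using Sym2.ind with
  | _ A B => exact ⟨A, B, A, B, rfl, rfl, subset_rfl, subset_rfl⟩

lemma extends_parts {T : Sym2 (Set X)} {A B : Set X} (h : SplitExtends T s(A, B)) :
    ∃ A' B', T = s(A', B') ∧ A ⊆ A' ∧ B ⊆ B' := by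
  obtain ⟨P, Q, C, D, hT, hS, hC, hD⟩ := h
  rcases Sym2.eq_iff.mp hS with ⟨rfl, rfl⟩ | ⟨rfl, rfl⟩
  · exact ⟨P, Q, hT, hC, hD⟩
  · exact ⟨Q, P, hT.trans Sym2.eq_swap, hD, hC⟩

lemma extends_trans' {S T U : Sym2 (Set X)} (h1 : SplitExtends S T) (h2 : SplitExtends T U) :
    SplitExtends S U := by
  obtain ⟨P, Q, E, F, hT2, hU, hE, hF⟩ := h2
  obtain ⟨P', Q', hS, hP, hQ⟩ := extends_parts (hT2 ▸ h1)
  exact ⟨P', Q', E, F, hS, hU, hE.trans hP, hF.trans hQ⟩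

lemma isps_parts {A B : Set X} (h : IsPartialSplit s(A, B)) :
    A.Nonempty ∧ B.Nonempty ∧ Disjoint A B := by
  obtain ⟨C, D, hCD, hC, hD, hdis⟩ := h
  rcases Sym2.eq_iff.mp hCD with ⟨rfl, rfl⟩ | ⟨rfl, rfl⟩
  · exact ⟨hC, hD, hdis⟩
  · exact ⟨hD, hC, hdis.symm⟩

/-- The total size of the two parts of a split. -/
noncomputable def msize : Sym2 (Set X) → ℕ :=
  Sym2.lift ⟨fun A B => A.ncard + B.ncard, fun A B => add_comm _ _⟩

@[simp] lemma msize_mk (A B : Set X) : msize s(A, B) = A.ncard + B.ncard := rfl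

lemma msize_le [Fintype X] (S : Sym2 (Set X)) : msize S ≤ 2 * Fintype.card X := by
  induction S using Sym2.ind with
  | _ A B =>
    have hA : A.ncard ≤ Fintype.card X := by
      have := Set.ncard_le_ncard (Set.subset_univ A) Set.finite_univ
      rwa [Set.ncard_univ, Nat.card_eq_fintype_card] at this
    have hB : B.ncard ≤ Fintype.card X := by
      have := Set.ncard_le_ncard (Set.subset_univ B) Set.finite_univ
      rwa [Set.ncard_univ, Nat.card_eq_fintype_card] at this
    simp only [msize_mk]
    omega

lemma msize_lt [Fintype X] {T S : Sym2 (Set X)} (h : SplitExtends T S) (hne : T ≠ S) :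
    msize S < msize T := by
  obtain ⟨A, B, C, D, rfl, rfl, hC, hD⟩ := h
  simp only [msize_mk]
  have h1 : C.ncard ≤ A.ncard := Set.ncard_le_ncard hC A.toFinite
  have h2 : D.ncard ≤ B.ncard := Set.ncard_le_ncard hD B.toFinite
  rcases lt_or_eq_of_le h1 with h | h
  · omega
  rcases lt_or_eq_of_le h2 with h' | h'
  · omega
  exfalso
  have e1 : C = A := Set.eq_of_subset_of_ncard_le hC h.ge
  have e2 : D = B := Set.eq_of_subset_of_ncard_le hD h'.ge
  exact hne (by rw [e1, e2])

lemma extends_antisymm' [Fintype X] {S T : Sym2 (Set X)} (h1 : SplitExtends S T)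
    (h2 : SplitExtends T S) : S = T := by
  by_contra hne
  have a := msize_lt h1 hne
  have b := msize_lt h2 (Ne.symm hne)
  omega

lemma preceq_refl' (Sig : Set (Sym2 (Set X))) : Preceq Sig Sig :=
  fun S hS => ⟨S, hS, extends_refl' S⟩

lemma preceq_trans' {A B C : Set (Sym2 (Set X))} (h1 : Preceq A B) (h2 : Preceq B C) :
    Preceq A C := by
  intro S hS
  obtain ⟨T, hT, he⟩ := h1 S hS
  obtain ⟨U, hU, he2⟩ := h2 T hT
  exact ⟨U, hU, extends_trans' he2 he⟩

lemma preceq_sreduce' [Fintype X] (Sig : Set (Sym2 (Set X))) : Preceq Sig (sreduce Sig) := by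
  have key : ∀ (k : ℕ) (S : Sym2 (Set X)), S ∈ Sig → 2 * Fintype.card X < msize S + k →
      ∃ T ∈ sreduce Sig, SplitExtends T S := by
    intro k
    induction k with
    | zero =>
      intro S hS hlt
      have := msize_le S
      omega
    | succ k ih =>
      intro S hS hlt
      by_cases hred : ∃ T ∈ Sig, T ≠ S ∧ SplitExtends T S
      · obtain ⟨T, hTm, hTne, hTe⟩ := hred
        have := msize_lt hTe hTne
        obtain ⟨U, hUm, hUe⟩ := ih T hTm (by omega)
        exact ⟨U, hUm, extends_trans' hUe hTe⟩
      · exact ⟨S, ⟨hS, hred⟩, extends_refl' S⟩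
  intro S hS
  exact key (2 * Fintype.card X + 1) S hS (by omega)

lemma preceq_antisymm' [Fintype X] {A B : Set (Sym2 (Set X))}
    (h1 : InPX A) (h2 : InPX B) (p1 : Preceq A B) (p2 : Preceq B A) : A = B := by
  have key : ∀ (C D : Set (Sym2 (Set X))), InPX C → Preceq C D → Preceq D C →
      ∀ S ∈ C, S ∈ D := by
    intro C D hC pcd pdc S hS
    obtain ⟨T, hTm, hTe⟩ := pcd S hS
    obtain ⟨U, hUm, hUe⟩ := pdc T hTm
    have hUS : SplitExtends U S := extends_trans' hUe hTe
    have hUeq : U = S := by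
      by_contra hne
      have hsr : S ∈ sreduce C := by rw [hC.2]; exact hS
      exact hsr.2 ⟨U, hUm, hne, hUS⟩
    rw [hUeq] at hUe
    have hTS : S = T := extends_antisymm' hUe hTe
    rw [hTS]; exact hTm
  ext S
  exact ⟨fun h => key _ _ h1 p1 p2 S h, fun h => key _ _ h2 p2 p1 S h⟩

lemma wc_of_preceq {Sig Om : Set (Sym2 (Set X))} (hpre : Preceq Sig Om)
    (hwc : WeaklyCompatible Om) : WeaklyCompatible Sig := by
  intro S1 hS1 S2 hS2 S3 hS3 A1 B1 A2 B2 A3 B3 e1 e2 e3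
  subst e1 e2 e3
  obtain ⟨T1, hT1m, hT1e⟩ := hpre _ hS1
  obtain ⟨A1', B1', rfl, hA1, hB1⟩ := extends_parts hT1e
  obtain ⟨T2, hT2m, hT2e⟩ := hpre _ hS2
  obtain ⟨A2', B2', rfl, hA2, hB2⟩ := extends_parts hT2e
  obtain ⟨T3, hT3m, hT3e⟩ := hpre _ hS3
  obtain ⟨A3', B3', rfl, hA3, hB3⟩ := extends_parts hT3e
  rcases hwc _ hT1m _ hT2m _ hT3m A1' B1' A2' B2' A3' B3' rfl rfl rfl with h | h | h | h
  · left
    apply Set.eq_empty_of_subset_empty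
    intro x hx
    exact h ▸ (⟨⟨hA1 hx.1.1, hA2 hx.1.2⟩, hA3 hx.2⟩ : x ∈ A1' ∩ A2' ∩ A3')
  · right; left
    apply Set.eq_empty_of_subset_empty
    intro x hx
    exact h ▸ (⟨⟨hB1 hx.1.1, hB2 hx.1.2⟩, hA3 hx.2⟩ : x ∈ B1' ∩ B2' ∩ A3')
  · right; right; left
    apply Set.eq_empty_of_subset_empty
    intro x hx
    exact h ▸ (⟨⟨hB1 hx.1.1, hA2 hx.1.2⟩, hB3 hx.2⟩ : x ∈ B1' ∩ A2' ∩ B3')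
  · right; right; right
    apply Set.eq_empty_of_subset_empty
    intro x hx
    exact h ▸ (⟨⟨hA1 hx.1.1, hB2 hx.1.2⟩, hB3 hx.2⟩ : x ∈ A1' ∩ B2' ∩ B3')

lemma m_lemma [Fintype X] {Sig Sig' Om : Set (Sym2 (Set X))}
    (hparts : ∀ S ∈ Om, IsPartialSplit S) (hcl : mClosed Om)
    (hpre : Preceq Sig Om) (hstep : mStepNT Sig Sig') : Preceq Sig' Om := by
  obtain ⟨A1, B1, A2, B2, h1, h2, hne, hcond, -, rfl⟩ := hstep
  have hout : Preceq (mOut A1 B1 A2 B2) Om := by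
    obtain ⟨T1, hT1m, hT1e⟩ := hpre _ h1
    obtain ⟨A1', B1', rfl, hA1, hB1⟩ := extends_parts hT1e
    obtain ⟨T2, hT2m, hT2e⟩ := hpre _ h2
    obtain ⟨A2', B2', rfl, hA2, hB2⟩ := extends_parts hT2e
    have hd1 : Disjoint A1' B1' := (isps_parts (hparts _ hT1m)).2.2
    by_cases hTT : s(A1', B1') = s(A2', B2')
    · rcases Sym2.eq_iff.mp hTT with ⟨e1, e2⟩ | ⟨e1, e2⟩
      · intro S hS
        simp only [mOut, Set.mem_insert_iff, Set.mem_singleton_iff] at hS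
        rcases hS with rfl | rfl | rfl | rfl
        · exact ⟨_, hT1m, A1', B1', A1, B1, rfl, rfl, hA1, hB1⟩
        · exact ⟨_, hT2m, A2', B2', A2, B2, rfl, rfl, hA2, hB2⟩
        · refine ⟨_, hT1m, A1', B1', A1 ∩ A2, B1 ∪ B2, rfl, rfl, ?_, ?_⟩
          · exact (Set.inter_subset_left).trans hA1
          · exact Set.union_subset hB1 (by rw [e2]; exact hB2)
        · refine ⟨_, hT1m, B1', A1', B1 ∩ B2, A1 ∪ A2, Sym2.eq_swap.symm, rfl, ?_, ?_⟩
          · exact (Set.inter_subset_left).trans hB1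
          · exact Set.union_subset hA1 (by rw [e1]; exact hA2)
      · exfalso
        obtain ⟨x, hx1, hx2⟩ := hcond.1
        exact Set.disjoint_left.mp hd1 (hA1 hx1) (by rw [e2]; exact hA2 hx2)
    · have hcond' : mCond A1' B1' A2' B2' :=
        ⟨hcond.1.mono (Set.inter_subset_inter hA1 hA2),
         hcond.2.mono (Set.inter_subset_inter hB1 hB2)⟩
      have houtp : Preceq (mOut A1' B1' A2' B2') Om :=
        preceq_trans' (preceq_sreduce' _) (hcl A1' B1' A2' B2' hT1m hT2m hTT hcond')
      intro S hS
      simp only [mOut, Set.mem_insert_iff, Set.mem_singleton_iff] at hS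
      rcases hS with rfl | rfl | rfl | rfl
      · exact ⟨_, hT1m, A1', B1', A1, B1, rfl, rfl, hA1, hB1⟩
      · exact ⟨_, hT2m, A2', B2', A2, B2, rfl, rfl, hA2, hB2⟩
      · obtain ⟨W, hWm, hWe⟩ := houtp s(A1' ∩ A2', B1' ∪ B2') (by simp [mOut])
        exact ⟨W, hWm, extends_trans' hWe ⟨_, _, _, _, rfl, rfl,
          Set.inter_subset_inter hA1 hA2, Set.union_subset_union hB1 hB2⟩⟩
      · obtain ⟨W, hWm, hWe⟩ := houtp s(B1' ∩ B2', A1' ∪ A2') (by simp [mOut])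
        exact ⟨W, hWm, extends_trans' hWe ⟨_, _, _, _, rfl, rfl,
          Set.inter_subset_inter hB1 hB2, Set.union_subset_union hA1 hA2⟩⟩
  intro S hS
  rcases hS.1 with h | h
  · exact hpre S h
  · exact hout S h

lemma y_lemma [Fintype X] {Sig Sig' Om : Set (Sym2 (Set X))}
    (hparts : ∀ S ∈ Om, IsPartialSplit S) (hwc : WeaklyCompatible Om) (hcl : yClosed Om)
    (hpre : Preceq Sig Om) (hstep : yStepNT Sig Sig') : Preceq Sig' Om := by
  obtain ⟨A1, B1, A2, B2, A3, B3, h1, h2, h3, -, -, -, hcond, -, rfl⟩ := hstep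
  obtain ⟨hN1, hN2, hN3, hE⟩ := hcond
  obtain ⟨T1, hT1m, hT1e⟩ := hpre _ h1
  obtain ⟨A1', B1', rfl, hA1, hB1⟩ := extends_parts hT1e
  obtain ⟨T2, hT2m, hT2e⟩ := hpre _ h2
  obtain ⟨A2', B2', rfl, hA2, hB2⟩ := extends_parts hT2e
  obtain ⟨T3, hT3m, hT3e⟩ := hpre _ h3
  obtain ⟨A3', B3', rfl, hA3, hB3⟩ := extends_parts hT3e
  obtain ⟨x1, hx1⟩ := hN1
  obtain ⟨hx1a, hx1b⟩ := hx1
  obtain ⟨hx1a, hx1c⟩ := hx1a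
  obtain ⟨x2, hx2⟩ := hN2
  obtain ⟨hx2a, hx2b⟩ := hx2
  obtain ⟨hx2a, hx2c⟩ := hx2a
  obtain ⟨x3, hx3⟩ := hN3
  obtain ⟨hx3a, hx3b⟩ := hx3
  obtain ⟨hx3a, hx3c⟩ := hx3a
  -- x1 ∈ A1 ∩ A2 ∩ A3 : hx1a : x1 ∈ A1, hx1c : x1 ∈ A2, hx1b : x1 ∈ A3
  -- x2 ∈ B1 ∩ B2 ∩ A3 : hx2a : x2 ∈ B1, hx2c : x2 ∈ B2, hx2b : x2 ∈ A3
  -- x3 ∈ B1 ∩ A2 ∩ B3 : hx3a : x3 ∈ B1, hx3c : x3 ∈ A2, hx3b : x3 ∈ B3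
  have hd1 : Disjoint A1' B1' := (isps_parts (hparts _ hT1m)).2.2
  have hd2 : Disjoint A2' B2' := (isps_parts (hparts _ hT2m)).2.2
  have hne12 : s(A1', B1') ≠ s(A2', B2') := by
    intro h
    rcases Sym2.eq_iff.mp h with ⟨e1, e2⟩ | ⟨e1, e2⟩
    · exact Set.disjoint_left.mp hd1 (by rw [e1]; exact hA2 hx3c) (hB1 hx3a)
    · exact Set.disjoint_left.mp hd1 (hA1 hx1a) (by rw [e2]; exact hA2 hx1c)
  have hne13 : s(A1', B1') ≠ s(A3', B3') := by
    intro h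
    rcases Sym2.eq_iff.mp h with ⟨e1, e2⟩ | ⟨e1, e2⟩
    · exact Set.disjoint_left.mp hd1 (by rw [e1]; exact hA3 hx2b) (hB1 hx2a)
    · exact Set.disjoint_left.mp hd1 (hA1 hx1a) (by rw [e2]; exact hA3 hx1b)
  have hne23 : s(A2', B2') ≠ s(A3', B3') := by
    intro h
    rcases Sym2.eq_iff.mp h with ⟨e1, e2⟩ | ⟨e1, e2⟩
    · exact Set.disjoint_left.mp hd2 (hA2 hx3c) (by rw [e2]; exact hB3 hx3b)
    · exact Set.disjoint_left.mp hd2 (hA2 hx1c) (by rw [e2]; exact hA3 hx1b)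
  have hwct := hwc _ hT1m _ hT2m _ hT3m A1' B1' A2' B2' A3' B3' rfl rfl rfl
  have hE' : A1' ∩ B2' ∩ B3' = ∅ := by
    rcases hwct with h | h | h | h
    · exact absurd h (Set.Nonempty.ne_empty ⟨x1, ⟨hA1 hx1a, hA2 hx1c⟩, hA3 hx1b⟩)
    · exact absurd h (Set.Nonempty.ne_empty ⟨x2, ⟨hB1 hx2a, hB2 hx2c⟩, hA3 hx2b⟩)
    · exact absurd h (Set.Nonempty.ne_empty ⟨x3, ⟨hB1 hx3a, hA2 hx3c⟩, hB3 hx3b⟩)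
    · exact h
  have hcond' : yCond A1' B1' A2' B2' A3' B3' :=
    ⟨⟨x1, ⟨hA1 hx1a, hA2 hx1c⟩, hA3 hx1b⟩, ⟨x2, ⟨hB1 hx2a, hB2 hx2c⟩, hA3 hx2b⟩,
     ⟨x3, ⟨hB1 hx3a, hA2 hx3c⟩, hB3 hx3b⟩, hE'⟩
  have houtp : Preceq (yOut A1' B1' A2' B2' A3' B3') Om :=
    preceq_trans' (preceq_sreduce' _)
      (hcl A1' B1' A2' B2' A3' B3' hT1m hT2m hT3m hne12 hne13 hne23 hcond')
  intro S hS
  rcases hS.1 with h | h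
  · exact hpre S h
  · simp only [yOut, Set.mem_insert_iff, Set.mem_singleton_iff] at h
    rcases h with rfl | rfl | rfl
    · obtain ⟨W, hWm, hWe⟩ := houtp s(B1' ∪ B2' ∩ B3', A1') (by simp [yOut])
      exact ⟨W, hWm, extends_trans' hWe ⟨_, _, _, _, rfl, rfl,
        Set.union_subset_union hB1 (Set.inter_subset_inter hB2 hB3), hA1⟩⟩
    · obtain ⟨W, hWm, hWe⟩ := houtp s(A2' ∪ A1' ∩ B3', B2') (by simp [yOut])
      exact ⟨W, hWm, extends_trans' hWe ⟨_, _, _, _, rfl, rfl,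
        Set.union_subset_union hA2 (Set.inter_subset_inter hA1 hB3), hB2⟩⟩
    · obtain ⟨W, hWm, hWe⟩ := houtp s(A3' ∪ A1' ∩ B2', B3') (by simp [yOut])
      exact ⟨W, hWm, extends_trans' hWe ⟨_, _, _, _, rfl, rfl,
        Set.union_subset_union hA3 (Set.inter_subset_inter hA1 hB2), hB3⟩⟩

lemma closure_unique [Fintype X]
    (P : Set (Sym2 (Set X)) → Prop)
    (stepNT : Set (Sym2 (Set X)) → Set (Sym2 (Set X)) → Prop)
    (closed : Set (Sym2 (Set X)) → Prop)
    (hstep_pre : ∀ Sg Sg' Om : Set (Sym2 (Set X)),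
      (∀ S ∈ Om, IsPartialSplit S) → P Om → closed Om → Preceq Sg Om → stepNT Sg Sg' →
      Preceq Sg' Om)
    (hP_down : ∀ Sg Om : Set (Sym2 (Set X)), Preceq Sg Om → P Om → P Sg)
    (Sig : Set (Sym2 (Set X)))
    (cl1 cl2 : Option (Set (Sym2 (Set X))))
    (h1 : IsSplitClosure P stepNT closed Sig cl1)
    (h2 : IsSplitClosure P stepNT closed Sig cl2) : cl1 = cl2 := by
  obtain ⟨n, f, hf, hend1⟩ := h1
  obtain ⟨m, g, hg, hend2⟩ := h2
  have key : ∀ (n' : ℕ) (f' : ℕ → Set (Sym2 (Set X))), IsClosureSeq P stepNT Sig n' f' →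
      ∀ (m' : ℕ) (g' : ℕ → Set (Sym2 (Set X))), IsClosureSeq P stepNT Sig m' g' →
      P (g' m') → closed (g' m') → Preceq (f' n') (g' m') := by
    intro n' f' hf' m' g' hg' hP hC
    have hchain : ∀ i, i ≤ m' → Preceq Sig (g' i) := by
      intro i
      induction i with
      | zero => intro _; rw [hg'.1]; exact preceq_refl' _
      | succ i ih =>
        intro hle
        exact preceq_trans' (ih (by omega)) (hg'.2.2 i (by omega)).2.2.1
    have hmain : ∀ i, i ≤ n' → Preceq (f' i) (g' m') := by
      intro i
      induction i with
      | zero => intro _; rw [hf'.1]; exact hchain m' le_rfl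
      | succ i ih =>
        intro hle
        exact hstep_pre (f' i) (f' (i + 1)) (g' m') (hg'.2.1 m' le_rfl).1 hP hC
          (ih (by omega)) (hf'.2.2 i (by omega)).2.1
    exact hmain n' le_rfl
  rcases hend1 with ⟨hP1, hC1, rfl⟩ | ⟨hnP1, rfl⟩
  · rcases hend2 with ⟨hP2, hC2, rfl⟩ | ⟨hnP2, rfl⟩
    · have p12 := key n f hf m g hg hP2 hC2
      have p21 := key m g hg n f hf hP1 hC1
      rw [preceq_antisymm' (hf.2.1 n le_rfl) (hg.2.1 m le_rfl) p12 p21]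
    · exact absurd (hP_down _ _ (key m g hg n f hf hP1 hC1) hP1) hnP2
  · rcases hend2 with ⟨hP2, hC2, rfl⟩ | ⟨hnP2, rfl⟩
    · exact absurd (hP_down _ _ (key n f hf m g hg hP2 hC2) hP2) hnP1
    · rfl

/-- for `θ` any of the `Y`-, `M`- or `M/Y`-rules (the split closure of a
non-weakly-compatible collection being `ω = none` for the `Y`- and `M/Y`-rules), any two
split closures of any `Σ ∈ P(X)` obtained via `θ` are equal. -/
theorem statement14 {X : Type*} [Fintype X]
    (cls : Set (Sym2 (Set X)) → Option (Set (Sym2 (Set X))) → Prop)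
    (hcls : cls = IsYClosure ∨ cls = IsMClosure ∨ cls = IsMYClosure)
    (Sig : Set (Sym2 (Set X))) (hPX : InPX Sig)
    (cl1 cl2 : Option (Set (Sym2 (Set X))))
    (h1 : cls Sig cl1) (h2 : cls Sig cl2) :
    cl1 = cl2 := by
  rcases hcls with rfl | rfl | rfl
  · exact closure_unique WeaklyCompatible yStepNT yClosed
      (fun _ _ _ hp hP hC hpre hstep => y_lemma hp hP hC hpre hstep)
      (fun _ _ hpre hP => wc_of_preceq hpre hP) Sig cl1 cl2 h1 h2
  · exact closure_unique (fun _ => True) mStepNT mClosed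
      (fun _ _ _ hp _ hC hpre hstep => m_lemma hp hC hpre hstep)
      (fun _ _ _ _ => trivial) Sig cl1 cl2 h1 h2
  · exact closure_unique WeaklyCompatible (fun s s' => mStepNT s s' ∨ yStepNT s s')
      (fun s => mClosed s ∧ yClosed s)
      (fun _ _ _ hp hP hC hpre hstep => by
        rcases hstep with hstep | hstep
        · exact m_lemma hp hC.1 hpre hstep
        · exact y_lemma hp hP hC.2 hpre hstep)
      (fun _ _ hpre hP => wc_of_preceq hpre hP) Sig cl1 cl2 h1 h2
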